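/- Let V be a complex vector space of dimension g ≥ 3 and let X ⊆ S(V,V*) be a 3-dimensional linear subspace such that for every v ∈ V the evaluation map e_v : X → V* fails to be injective. Then X = W^⊥ for some linear subspace W ⊆ V of dimension g - 2. -/

import Mathlib

/-- The subspace `W^⊥ ⊆ S(V,V*)` of symmetric linear maps `V → V*` vanishing on the
subspace `W ⊆ V` (i.e. those `M` with `W ⊆ ker M`). -/
noncomputable def symPerp {V : Type*} [AddCommGroup V] [Module ℂ V] (W : Submodule ℂ V) :
    Submodule ℂ (V →ₗ[ℂ] Module.Dual ℂ V) where
  carrier := {M | (∀ x y : V, M x y = M y x) ∧ ∀ w ∈ W, M w = 0}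
  add_mem' := fun {a b} ha hb =>
    ⟨fun x y => by simp only [LinearMap.add_apply, ha.1 x y, hb.1 x y],
     fun w hw => by simp only [LinearMap.add_apply, ha.2 w hw, hb.2 w hw, add_zero]⟩
  zero_mem' := ⟨fun x y => rfl, fun w hw => rfl⟩
  smul_mem' := fun c a ha =>
    ⟨fun x y => by simp only [LinearMap.smul_apply, ha.1 x y],
     fun w hw => by simp only [LinearMap.smul_apply, ha.2 w hw, smul_zero]⟩

/-!
If `e_v(X)` were at most a line for every `v`, any two members of `X` would be pointwise
proportional, and for symmetric forms this makes them proportional. So there are `v₀` and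
`B, C ∈ X` with `B v₀, C v₀` independent; take `0 ≠ A ∈ X` with `A v₀ = 0`, so that `A, B, C`
is a basis of `X`. For every `v` the values `A v, B v, C v` are dependent, hence every `3 × 3`
minor `det (M_i v (z_j))` vanishes. With `U = span {B v₀, C v₀}` and a dual pair `u, w`, the
first two Taylor coefficients of these minors along `v₀ + t • x` give `A x ∈ U` and
`A x u • B x + A x w • C x ∈ U`. If some value of `B` or `C` left `U`, minors evaluated at a
point killed by `U` but not by that value would force `A = 0` (if `A` has rank two) or a
combination of `B, C` to be proportional to `A` (if `A` has rank one). Thus `X ⊆ S²U = W^⊥`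
with `W = U^⊥`, and both have dimension `3`.
-/

open Module Submodule

section

variable {K V : Type*} [Field K] [AddCommGroup V] [Module K V]

theorem exists_apply_eq_one_of_notMem_span {ι : Type*} [Finite ι] {L : ι → Dual K V}
    {ξ : Dual K V} (h : ξ ∉ span K (Set.range L)) : ∃ z, ξ z = 1 ∧ ∀ i, L i z = 0 := by
  obtain ⟨z, hz, hξz⟩ : ∃ z ∈ ⨅ i, LinearMap.ker (L i), ξ z ≠ 0 := by
    by_contra! hle
    exact h (mem_span_of_iInf_ker_le_ker hle)
  refine ⟨(ξ z)⁻¹ • z, by simp [hξz], fun i => ?_⟩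
  simp [LinearMap.mem_ker.mp (mem_iInf _ |>.mp hz i)]

theorem exists_apply_eq_one {φ : Dual K V} (hφ : φ ≠ 0) : ∃ z, φ z = 1 := by
  obtain ⟨z, hz, -⟩ := exists_apply_eq_one_of_notMem_span (L := ![]) (by simpa using hφ)
  exact ⟨z, hz⟩

theorem exists_apply_eq_one_of_notMem_span_pair {ξ β γ : Dual K V} (h : ξ ∉ span K {β, γ}) :
    ∃ z, ξ z = 1 ∧ β z = 0 ∧ γ z = 0 := by
  rw [← Matrix.range_cons_cons_empty β γ ![]] at h
  obtain ⟨z, hξz, hz⟩ := exists_apply_eq_one_of_notMem_span h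
  exact ⟨z, hξz, hz 0, hz 1⟩

theorem exists_apply_eq_one_of_linearIndependent {φ ψ : Dual K V}
    (h : LinearIndependent K ![φ, ψ]) : ∃ u, φ u = 1 ∧ ψ u = 0 := by
  obtain ⟨u, hu, hψu⟩ := exists_apply_eq_one_of_notMem_span (linearIndependent_finCons.mp h).2
  exact ⟨u, hu, hψu 0⟩

theorem apply_eq_zero_of_mem_span_pair {β γ φ : Dual K V} {z : V} (hφ : φ ∈ span K {β, γ})
    (hβ : β z = 0) (hγ : γ z = 0) : φ z = 0 := by
  obtain ⟨a, b, rfl⟩ := mem_span_pair.mp hφ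
  simp [hβ, hγ]

theorem apply_mem_of_forall_apply_ne_zero {E : Type*} [AddCommGroup E] [Module K E]
    {f : Dual K V} (hf : f ≠ 0) {L : V →ₗ[K] E} {U : Submodule K E}
    (h : ∀ x, f x ≠ 0 → L x ∈ U) (x : V) : L x ∈ U := by
  obtain ⟨z, hz⟩ := exists_apply_eq_one hf
  by_cases hx : f x = 0
  · have hxz : L x = L (x + z) - L z := by simp
    rw [hxz]
    exact U.sub_mem (h _ (by simp [hx, hz])) (h z (by simp [hz]))
  · exact h x hx

structure IsDualPair (β γ : Dual K V) (u w : V) : Prop where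
  fst_fst : β u = 1
  fst_snd : β w = 0
  snd_fst : γ u = 0
  snd_snd : γ w = 1

theorem exists_isDualPair {φ ψ : Dual K V} (h : LinearIndependent K ![φ, ψ]) :
    ∃ u w, IsDualPair φ ψ u w := by
  obtain ⟨u, hφu, hψu⟩ := exists_apply_eq_one_of_linearIndependent h
  obtain ⟨w, hψw, hφw⟩ := exists_apply_eq_one_of_linearIndependent
    (LinearIndependent.pair_symm_iff.mp h : LinearIndependent K ![ψ, φ])
  exact ⟨u, w, ⟨hφu, hφw, hψu, hψw⟩⟩

namespace IsDualPair

variable {β γ φ ψ : Dual K V} {u w : V}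

theorem eq_of_mem_span (h : IsDualPair β γ u w) (hφ : φ ∈ span K {β, γ}) :
    φ = φ u • β + φ w • γ := by
  obtain ⟨a, b, rfl⟩ := mem_span_pair.mp hφ
  ext z
  simp [h.fst_fst, h.fst_snd, h.snd_fst, h.snd_snd]

theorem eq_zero_of_mem_span (h : IsDualPair β γ u w) (hφ : φ ∈ span K {β, γ}) (hu : φ u = 0)
    (hw : φ w = 0) : φ = 0 := by
  simpa [hu, hw] using h.eq_of_mem_span hφ

theorem not_linearIndependent_of_mem_span (h : IsDualPair β γ u w) (hφ : φ ∈ span K {β, γ})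
    (hψ : ψ ∈ span K {β, γ}) (hminor : φ u * ψ w = φ w * ψ u) : ¬ LinearIndependent K ![φ, ψ] := by
  obtain ⟨g, hg0, hg⟩ := Matrix.exists_vecMul_eq_zero_iff.mpr
    (show (Matrix.of ![![φ u, φ w], ![ψ u, ψ w]]).det = 0 by
      rw [Matrix.det_fin_two_of]
      linear_combination hminor)
  rw [LinearIndependent.pair_iff]
  push Not
  refine ⟨g 0, g 1, h.eq_zero_of_mem_span (add_mem (smul_mem _ _ hφ) (smul_mem _ _ hψ)) ?_ ?_, ?_⟩
  · simpa [Matrix.vecMul, dotProduct, Fin.sum_univ_two] using congrFun hg 0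
  · simpa [Matrix.vecMul, dotProduct, Fin.sum_univ_two] using congrFun hg 1
  · intro h0 h1
    exact hg0 (funext fun i => by fin_cases i <;> simp [h0, h1])

end IsDualPair

theorem finrank_dualCoannihilator_span_pair [FiniteDimensional K V] {β γ : Dual K V}
    (h : LinearIndependent K ![β, γ]) :
    finrank K (span K {β, γ}).dualCoannihilator = finrank K V - 2 := by
  have hU := Subspace.finrank_add_finrank_dualCoannihilator_eq (span K {β, γ})
  rw [← Matrix.range_cons_cons_empty β γ ![], finrank_span_eq_card h] at hU
  rw [← Matrix.range_cons_cons_empty β γ ![]]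
  simp only [Fintype.card_fin] at hU
  omega

theorem det_eq_zero_of_not_linearIndependent {ι : Type*} [Fintype ι] [DecidableEq ι]
    {f : ι → Dual K V} (hf : ¬ LinearIndependent K f) (z : ι → V) :
    (Matrix.of fun i j => f i (z j)).det = 0 := by
  obtain ⟨g, hg, i, hi⟩ := Fintype.not_linearIndependent_iff.mp hf
  refine Matrix.exists_vecMul_eq_zero_iff.mp ⟨g, fun h => hi (congrFun h i), funext fun j => ?_⟩
  simpa [Matrix.vecMul, dotProduct] using congrArg (fun φ : Dual K V => φ (z j)) hg

theorem not_linearIndependent_of_forall_mem_span {ι E : Type*} [Fintype ι] [AddCommGroup E]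
    [Module K E] {f g : ι → E} (hf : ¬ LinearIndependent K f)
    (hg : ∀ i, g i ∈ span K (Set.range f)) : ¬ LinearIndependent K g := by
  intro hg'
  have := FiniteDimensional.span_of_finite K (Set.finite_range f)
  have hle : span K (Set.range g) ≤ span K (Set.range f) :=
    span_le.mpr (Set.range_subset_iff.mpr hg)
  have h₁ := Submodule.finrank_mono hle
  have h₂ := finrank_range_le_card (R := K) f
  rw [linearIndependent_iff_card_eq_finrank_span] at hf hg'
  unfold Set.finrank at *
  omega

theorem not_linearIndependent_apply_of_mem_span {ι E : Type*} [Fintype ι] [AddCommGroup E]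
    [Module K E] {f : ι → V →ₗ[K] E} {M : V →ₗ[K] E} (hM : M ∈ span K (Set.range f))
    (hM0 : M ≠ 0) {v : V} (hMv : M v = 0) : ¬ LinearIndependent K fun i => f i v := by
  obtain ⟨c, rfl⟩ := (mem_span_range_iff_exists_fun K).mp hM
  rw [Fintype.not_linearIndependent_iff]
  refine ⟨c, by simpa using hMv, ?_⟩
  by_contra! hc
  exact hM0 (by simp [hc])

theorem linearIndependent_of_apply_eq_zero {E : Type*} [AddCommGroup E] [Module K E]
    {A B C : V →ₗ[K] E} {v₀ : V} (hA0 : A ≠ 0) (hAv₀ : A v₀ = 0)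
    (hBC : LinearIndependent K ![B v₀, C v₀]) : LinearIndependent K ![A, B, C] := by
  rw [Fintype.linearIndependent_iff (R := K) (M := V →ₗ[K] E)]
  intro g hg
  simp only [Fin.sum_univ_three, Matrix.cons_val_zero, Matrix.cons_val_one,
    Matrix.cons_val_two, Matrix.head_cons, Matrix.tail_cons] at hg
  obtain ⟨h₁, h₂⟩ := LinearIndependent.pair_iff.mp hBC (g 1) (g 2) (by
    simpa [hAv₀] using LinearMap.congr_fun hg v₀)
  have h₀ : g 0 = 0 := by
    simpa [h₁, h₂, hA0] using hg
  intro i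
  fin_cases i <;> assumption

theorem span_range_eq_of_linearIndependent {ι E : Type*} [Fintype ι] [AddCommGroup E]
    [Module K E] {X : Submodule K E} [FiniteDimensional K X] {f : ι → E}
    (hf : LinearIndependent K f) (hfX : ∀ i, f i ∈ X) (hX : finrank K X = Fintype.card ι) :
    span K (Set.range f) = X :=
  eq_of_le_of_finrank_le (span_le.mpr (Set.range_subset_iff.mpr hfX))
    (by rw [hX, finrank_span_eq_card hf])

theorem apply_mem_of_mem_span_range {ι E : Type*} [AddCommGroup E] [Module K E]
    {f : ι → V →ₗ[K] E} {U : Submodule K E} (hf : ∀ i x, f i x ∈ U) {M : V →ₗ[K] E}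
    (hM : M ∈ span K (Set.range f)) (x : V) : M x ∈ U :=
  span_le (p := U.comap (LinearMap.applyₗ x)) |>.mpr (Set.range_subset_iff.mpr (hf · x)) hM

theorem exists_ne_zero_apply_eq_zero_of_not_injective {E : Type*} [AddCommGroup E] [Module K E]
    {X : Submodule K (V →ₗ[K] E)} {v : V}
    (h : ¬ Function.Injective fun M : X => (M : V →ₗ[K] E) v) : ∃ M ∈ X, M ≠ 0 ∧ M v = 0 := by
  obtain ⟨M, N, hMN, hne⟩ := Function.not_injective_iff.mp h
  refine ⟨M - N, X.sub_mem M.2 N.2, fun h0 => hne (Subtype.ext (sub_eq_zero.mp h0)), ?_⟩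
  simpa [sub_eq_zero] using hMN

theorem quadratic_coeffs_eq_zero [CharZero K] {a b c : K}
    (h : ∀ t : K, t ≠ 0 → a + t * b + t ^ 2 * c = 0) : a = 0 ∧ b = 0 ∧ c = 0 := by
  have h₁ := h 1 one_ne_zero
  have h₂ := h (-1) (by norm_num)
  have h₃ := h 2 two_ne_zero
  have hb : b = 0 := by
    have : (2 : K) * b = 0 := by linear_combination h₁ - h₂
    simpa using this
  have hc : c = 0 := by
    have : (3 : K) * c = 0 := by linear_combination h₃ - h₁ - hb
    simpa using this
  exact ⟨by linear_combination h₁ - hb - hc, hb, hc⟩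

theorem mul_eq_mul_of_forall_apply_ne_zero [CharZero K] {ℓ f g f' g' : Dual K V} (hℓ : ℓ ≠ 0)
    (h : ∀ v, ℓ v ≠ 0 → f v * g v = f' v * g' v) (v : V) : f v * g v = f' v * g' v := by
  by_cases hv : ℓ v = 0
  swap
  · exact h v hv
  obtain ⟨v₁, hv₁⟩ := exists_apply_eq_one hℓ
  obtain ⟨h₀, -⟩ := quadratic_coeffs_eq_zero (a := f v * g v - f' v * g' v)
    (b := f v * g v₁ + f v₁ * g v - f' v * g' v₁ - f' v₁ * g' v)
    (c := f v₁ * g v₁ - f' v₁ * g' v₁) fun t ht => by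
      have := h (v + t • v₁) (by simp [hv, hv₁, ht])
      simp only [map_add, map_smul, smul_eq_mul] at this
      linear_combination this
  linear_combination h₀

theorem exists_apply_eq_smul_of_forall_mem_span_singleton {φ : Dual K V} (hφ : φ ≠ 0)
    {N : V →ₗ[K] Dual K V} (hN : ∀ x y, N x y = N y x) (h : ∀ x, N x ∈ span K {φ}) :
    ∃ d : K, ∀ x, N x = (d * φ x) • φ := by
  obtain ⟨z, hz⟩ := exists_apply_eq_one hφ
  have coord : ∀ x, N x = N x z • φ := fun x => by
    obtain ⟨a, ha⟩ := mem_span_singleton.mp (h x)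
    rw [← ha]
    simp [hz]
  refine ⟨N z z, fun x => ?_⟩
  rw [coord x, hN x z, coord z]
  simp [hz, mul_comm]

theorem exists_eq_smul_of_linearIndependent_apply {E : Type*} [AddCommGroup E] [Module K E]
    {M N : V →ₗ[K] E} {v w : V} (hvw : LinearIndependent K ![M v, M w])
    (h : ∀ x, ¬ LinearIndependent K ![M x, N x]) : ∃ α : K, N = α • M := by
  have hM : ∀ {x}, M x ≠ 0 → ∃ a : K, N x = a • M x := fun {x} hx => by
    have := h x
    rw [LinearIndependent.pair_iff' hx] at this
    push Not at this
    obtain ⟨a, ha⟩ := this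
    exact ⟨a, ha.symm⟩
  obtain ⟨a, ha⟩ := hM (x := v) (by simpa using hvw.ne_zero 0)
  obtain ⟨b, hb⟩ := hM (x := w) (by simpa using hvw.ne_zero 1)
  obtain ⟨c, hc⟩ := hM (x := v + w) (by
    intro h0
    have := LinearIndependent.pair_iff.mp hvw 1 1 (by simpa using h0)
    simp at this)
  obtain ⟨hac, hbc⟩ : a - c = 0 ∧ b - c = 0 :=
    LinearIndependent.pair_iff.mp hvw _ _ (by
      rw [map_add, map_add] at hc
      linear_combination (norm := module) hc - ha - hb)
  -- `N' = N - a • M` kills `v` and `w`; a nonzero value `N' x` would be proportional to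
  -- `M x`, `M (x + v)` and `M (x + w)`, hence to both `M v` and `M w`.
  refine ⟨a, sub_eq_zero.mp (LinearMap.ext fun x => ?_)⟩
  set N' := N - a • M
  have hN'v : N' v = 0 := by simp [N', ha]
  have hN'w : N' w = 0 := by simp [N', hb, sub_eq_zero.mp hac, sub_eq_zero.mp hbc]
  by_contra hx
  have hdep : ∀ y, ¬ LinearIndependent K ![N' y, M y] := fun y => by
    rw [LinearIndependent.pair_symm_iff, ← LinearIndependent.pair_add_smul_right_iff (c := a)]
    simpa [N'] using h y
  have hM' : ∀ y, N' y = N' x → ∃ k : K, M y = k • N' x := fun y hy => by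
    have := hdep y
    rw [hy, LinearIndependent.pair_iff' (by simpa [N'] using hx)] at this
    push Not at this
    obtain ⟨k, hk⟩ := this
    exact ⟨k, hk.symm⟩
  obtain ⟨k₀, hk₀⟩ := hM' x rfl
  obtain ⟨k₁, hk₁⟩ := hM' (x + v) (by simp [hN'v])
  obtain ⟨k₂, hk₂⟩ := hM' (x + w) (by simp [hN'w])
  obtain ⟨h₁, h₂⟩ := LinearIndependent.pair_iff.mp hvw (k₂ - k₀) (k₀ - k₁) (by
    rw [map_add] at hk₁ hk₂
    linear_combination (norm := module) (k₂ - k₀) • (hk₁ - hk₀) - (k₁ - k₀) • (hk₂ - hk₀))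
  have hMv : M v = 0 := by
    rw [map_add] at hk₁
    linear_combination (norm := module) hk₁ - hk₀ - h₂ • N' x
  exact hvw.ne_zero 0 (by simpa using hMv)

theorem exists_eq_smul_of_forall_not_linearIndependent {M N : V →ₗ[K] Dual K V} (hM0 : M ≠ 0)
    (hM : ∀ x y, M x y = M y x) (hN : ∀ x y, N x y = N y x)
    (h : ∀ x, ¬ LinearIndependent K ![M x, N x]) : ∃ α : K, N = α • M := by
  by_cases hrank : ∃ v w, LinearIndependent K ![M v, M w]
  · obtain ⟨v, w, hvw⟩ := hrank
    exact exists_eq_smul_of_linearIndependent_apply hvw h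
  push Not at hrank
  obtain ⟨x₀, hx₀⟩ : ∃ x₀, M x₀ ≠ 0 := by
    by_contra! hM0'
    exact hM0 (LinearMap.ext hM0')
  have hspan : ∀ {ψ : Dual K V}, ¬ LinearIndependent K ![M x₀, ψ] → ψ ∈ span K {M x₀} :=
    fun {ψ} hψ => by
      rw [LinearIndependent.pair_iff' hx₀] at hψ
      push Not at hψ
      exact mem_span_singleton.mpr hψ
  obtain ⟨c, hc⟩ := exists_apply_eq_smul_of_forall_mem_span_singleton hx₀ hM
    fun x => hspan (hrank x₀ x)
  have hc0 : c ≠ 0 := by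
    rintro rfl
    exact hx₀ (by simpa using hc x₀)
  have hNφ : ∀ x, N x ∈ span K {M x₀} := apply_mem_of_forall_apply_ne_zero hx₀ fun x hx => by
    have hdep := h x
    rw [LinearIndependent.pair_iff' (by simp [hc x, hc0, hx, hx₀])] at hdep
    push Not at hdep
    obtain ⟨a, ha⟩ := hdep
    rw [← ha, hc x]
    exact smul_mem _ _ (smul_mem _ _ (mem_span_singleton_self _))
  obtain ⟨d, hd⟩ := exists_apply_eq_smul_of_forall_mem_span_singleton hx₀ hN hNφ
  refine ⟨d / c, LinearMap.ext fun x => ?_⟩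
  rw [hd x, LinearMap.smul_apply, hc x, smul_smul]
  congr 1
  field_simp

theorem finrank_le_one_of_forall_not_linearIndependent (X : Submodule K (V →ₗ[K] Dual K V))
    (hX : ∀ M ∈ X, ∀ x y, M x y = M y x)
    (h : ∀ M ∈ X, ∀ N ∈ X, ∀ v, ¬ LinearIndependent K ![M v, N v]) : finrank K X ≤ 1 := by
  by_cases hX0 : X = ⊥
  · subst hX0
    simp
  obtain ⟨M, hMX, hM0⟩ := exists_mem_ne_zero_of_ne_bot hX0
  have hle : X ≤ span K {M} := fun N hNX => by
    obtain ⟨α, rfl⟩ :=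
      exists_eq_smul_of_forall_not_linearIndependent hM0 (hX M hMX) (hX N hNX) (h M hMX N hNX)
    exact smul_mem _ α (mem_span_singleton_self M)
  calc finrank K X ≤ finrank K (span K {M}) := Submodule.finrank_mono hle
    _ = 1 := finrank_span_singleton (V := V →ₗ[K] Dual K V) hM0

/-- The coefficients of `t` and `t²` in the minor of `A, B, C` at `v₀ + t • x`, evaluated at
`u, w, z`. -/
theorem minor_coeffs_eq_zero_of_apply_eq_zero [CharZero K] {A B C : V →ₗ[K] Dual K V} {v₀ u w : V}
    (hdep : ∀ v, ¬ LinearIndependent K ![A v, B v, C v]) (hA : A v₀ = 0)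
    (hβγ : IsDualPair (B v₀) (C v₀) u w) (x z : V) :
    A x z = A x u * B v₀ z + A x w * C v₀ z ∧
      A x u * B x z + A x w * C x z = (B x u + C x w) * A x z +
        (C x u * A x w - A x u * C x w) * B v₀ z + (A x u * B x w - B x u * A x w) * C v₀ z := by
  obtain ⟨h₀, h₁, -⟩ := quadratic_coeffs_eq_zero
    (a := A x z - A x u * B v₀ z - A x w * C v₀ z)
    (b := A x u * B x w * C v₀ z - A x u * B x z - A x u * B v₀ z * C x w - A x w * B x u * C v₀ z
      - A x w * C x z + A x w * B v₀ z * C x u + A x z * B x u + A x z * C x w)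
    (c := A x u * B x w * C x z - A x u * B x z * C x w - A x w * B x u * C x z
      + A x w * B x z * C x u + A x z * B x u * C x w - A x z * B x w * C x u)
    fun t ht => mul_left_cancel₀ ht <| by
      have h := det_eq_zero_of_not_linearIndependent (hdep (v₀ + t • x)) ![u, w, z]
      simp only [Matrix.det_fin_three, Matrix.of_apply, Matrix.cons_val_zero, Matrix.cons_val_one,
        Matrix.cons_val, map_add, map_smul, hA, zero_add, LinearMap.add_apply,
        LinearMap.smul_apply, smul_eq_mul, hβγ.fst_fst, hβγ.fst_snd, hβγ.snd_fst,
        hβγ.snd_snd] at h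
      linear_combination h
  exact ⟨by linear_combination h₀, by linear_combination -h₁⟩

theorem quadratic_identity_of_notMem_span {A B C : V →ₗ[K] Dual K V} {β γ ξ : Dual K V}
    {u w : V} (hA : ∀ x y, A x y = A y x) (hB : ∀ x y, B x y = B y x)
    (hC : ∀ x y, C x y = C y x) (hdep : ∀ v, ¬ LinearIndependent K ![A v, B v, C v])
    (hAU : ∀ x, A x ∈ span K {β, γ}) (hBξ : ∀ x, B x - A x w • ξ ∈ span K {β, γ})
    (hCξ : ∀ x, C x + A x u • ξ ∈ span K {β, γ}) (hξ : ξ ∉ span K {β, γ}) (y : V) :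
    2 * (A y u * A y w) * A u w = A y u ^ 2 * A w w + A y w ^ 2 * A u u := by
  obtain ⟨z, hξz, hβz, hγz⟩ := exists_apply_eq_one_of_notMem_span_pair hξ
  have hAz : ∀ x, A x z = 0 := fun x => apply_eq_zero_of_mem_span_pair (hAU x) hβz hγz
  have hBz : ∀ x, B x z = A x w := fun x => by
    have := apply_eq_zero_of_mem_span_pair (hBξ x) hβz hγz
    simpa [hξz, sub_eq_zero] using this
  have hCz : ∀ x, C x z = -A x u := fun x => by
    have := apply_eq_zero_of_mem_span_pair (hCξ x) hβz hγz
    simpa [hξz, add_eq_zero_iff_eq_neg] using this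
  have hzA : ∀ x, A z x = 0 := fun x => (hA z x).trans (hAz x)
  have hzB : ∀ x, B z x = A x w := fun x => (hB z x).trans (hBz x)
  have hzC : ∀ x, C z x = -A x u := fun x => (hC z x).trans (hCz x)
  -- the minors at `λ • z + y` are affine in `λ`, with the claimed identity as slope
  have h₁ := det_eq_zero_of_not_linearIndependent (hdep (z + y)) ![z, u, w]
  have h₀ := det_eq_zero_of_not_linearIndependent (hdep y) ![z, u, w]
  simp only [Matrix.det_fin_three, Matrix.of_apply, Matrix.cons_val_zero, Matrix.cons_val_one,
    Matrix.cons_val, map_add, LinearMap.add_apply, hAz, hBz, hCz, hzA, hzB, hzC, hA w u] at h₁ h₀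
  linear_combination h₁ - h₀

theorem apply_mem_span_pair_of_linearIndependent [CharZero K] {A B C : V →ₗ[K] Dual K V}
    {β γ : Dual K V} {u w : V} (hβγ : IsDualPair β γ u w) (hA : ∀ x y, A x y = A y x)
    (hB : ∀ x y, B x y = B y x) (hC : ∀ x y, C x y = C y x)
    (hdep : ∀ v, ¬ LinearIndependent K ![A v, B v, C v]) (hAU : ∀ x, A x ∈ span K {β, γ})
    (hBC : ∀ x, A x u • B x + A x w • C x ∈ span K {β, γ})
    (hAuw : LinearIndependent K ![A u, A w]) (x : V) :
    B x ∈ span K {β, γ} ∧ C x ∈ span K {β, γ} := by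
  set U := span K {β, γ}
  -- `A p = β` and `A q = γ`
  obtain ⟨p, q, hpq⟩ := exists_isDualPair hAuw
  have hpu : A p u = 1 := (hA p u).trans hpq.fst_fst
  have hpw : A p w = 0 := (hA p w).trans hpq.snd_fst
  have hqu : A q u = 0 := (hA q u).trans hpq.fst_snd
  have hqw : A q w = 1 := (hA q w).trans hpq.snd_snd
  have hpol : ∀ x y, A x u • B y + A y u • B x + A x w • C y + A y w • C x ∈ U := fun x y => by
    convert U.sub_mem (U.sub_mem (hBC (x + y)) (hBC x)) (hBC y) using 1
    simp only [map_add, LinearMap.add_apply]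
    module
  have hBp : B p ∈ U := by simpa [hpu, hpw] using hBC p
  have hCq : C q ∈ U := by simpa [hqu, hqw] using hBC q
  have hB' : ∀ y, B y + A y w • C p ∈ U := fun y => by
    convert U.sub_mem (hpol p y) (U.smul_mem (A y u) hBp) using 1
    simp only [hpu, hpw]
    module
  have hC' : ∀ y, C y + A y u • B q ∈ U := fun y => by
    convert U.sub_mem (hpol q y) (U.smul_mem (A y w) hCq) using 1
    simp only [hqu, hqw]
    module
  have hBξ : ∀ y, B y - A y w • B q ∈ U := fun y => by
    have hBqCp : B q + C p ∈ U := by simpa [hqw] using hB' q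
    convert U.sub_mem (hB' y) (U.smul_mem (A y w) hBqCp) using 1
    module
  by_cases hξ : B q ∈ U
  · exact ⟨by simpa using U.add_mem (hBξ x) (U.smul_mem (A x w) hξ),
      by simpa using U.sub_mem (hC' x) (U.smul_mem (A x u) hξ)⟩
  exfalso
  have hquad := quadratic_identity_of_notMem_span hA hB hC hdep hAU hBξ hC' hξ
  have h₁ := hquad p
  have h₂ := hquad q
  have h₃ := hquad (p + q)
  simp only [map_add, LinearMap.add_apply, hpu, hpw, hqu, hqw] at h₁ h₂ h₃
  have hσ : A u w = 0 := by
    have : (2 : K) * A u w = 0 := by linear_combination h₃ - h₁ - h₂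
    simpa using this
  exact hAuw.ne_zero 0 (by
    simpa using hβγ.eq_zero_of_mem_span (hAU u) (by linear_combination -h₂) hσ)

theorem apply_mem_span_pair_of_ne_smul [CharZero K] {A N P : V →ₗ[K] Dual K V}
    {β γ : Dual K V} {u w : V} (hβγ : IsDualPair β γ u w) (hA : ∀ x y, A x y = A y x)
    (hN : ∀ x y, N x y = N y x) (hA0 : A ≠ 0) (hNA : ∀ α : K, N ≠ α • A)
    (hAU : ∀ x, A x ∈ span K {β, γ}) (hNU : ∀ x, N x ∈ span K {β, γ})
    (hdep : ∀ v, ¬ LinearIndependent K ![A v, N v, P v]) (x : V) : P x ∈ span K {β, γ} := by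
  by_contra hPx
  obtain ⟨z, hPz, hβz, hγz⟩ := exists_apply_eq_one_of_notMem_span_pair hPx
  have hminor : ∀ v, A u v * N w v = A w v * N u v :=
    mul_eq_mul_of_forall_apply_ne_zero (ℓ := P.flip z)
      (fun h0 => by simpa [hPz] using LinearMap.congr_fun h0 x) fun v hv => by
      -- the minor at `z, u, w` is `P v z` times the minor of `A v, N v` at `u, w`
      have h := det_eq_zero_of_not_linearIndependent (hdep v) ![z, u, w]
      simp only [Matrix.det_fin_three, Matrix.of_apply, Matrix.cons_val_zero,
        Matrix.cons_val_one, Matrix.cons_val, apply_eq_zero_of_mem_span_pair (hAU v) hβz hγz,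
        apply_eq_zero_of_mem_span_pair (hNU v) hβz hγz] at h
      rw [LinearMap.flip_apply] at hv
      rw [← hA v u, ← hA v w, ← hN v u, ← hN v w, ← sub_eq_zero]
      exact (mul_eq_zero.mp (by linear_combination h)).resolve_right hv
  obtain ⟨α, hα⟩ := exists_eq_smul_of_forall_not_linearIndependent hA0 hA hN fun v =>
    hβγ.not_linearIndependent_of_mem_span (hAU v) (hNU v) (by
      rw [hA v u, hA v w, hN v u, hN v w]
      linear_combination hminor v)
  exact hNA α hα

theorem apply_mem_span_pair_of_not_linearIndependent [CharZero K] {A B C : V →ₗ[K] Dual K V}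
    {β γ : Dual K V} {u w : V} (hβγ : IsDualPair β γ u w) (hA : ∀ x y, A x y = A y x)
    (hB : ∀ x y, B x y = B y x) (hC : ∀ x y, C x y = C y x) (hA0 : A ≠ 0)
    (hABC : LinearIndependent K ![A, B, C])
    (hdep : ∀ v, ¬ LinearIndependent K ![A v, B v, C v]) (hAU : ∀ x, A x ∈ span K {β, γ})
    (hBC : ∀ x, A x u • B x + A x w • C x ∈ span K {β, γ})
    (hAuw : ¬ LinearIndependent K ![A u, A w]) (x : V) :
    B x ∈ span K {β, γ} ∧ C x ∈ span K {β, γ} := by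
  set U := span K {β, γ}
  obtain ⟨c₁, c₂, κ, hκ, hc, hBCκ⟩ : ∃ (c₁ c₂ : K) (κ : Dual K V), κ ≠ 0 ∧ ![c₁, c₂] ≠ 0 ∧
      ∀ x, A x u • B x + A x w • C x = κ x • (c₁ • B x + c₂ • C x) := by
    by_cases hAu : A u = 0
    · refine ⟨0, 1, A w, fun hAw => hA0 ?_, by simp, fun x => by simp [hA x u, hA x w, hAu]⟩
      ext x y
      rw [hβγ.eq_of_mem_span (hAU x), hA x u, hA x w, hAu, hAw]
      simp
    · rw [LinearIndependent.pair_iff' hAu] at hAuw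
      push Not at hAuw
      obtain ⟨a, ha⟩ := hAuw
      refine ⟨1, a, A u, hAu, by simp, fun x => ?_⟩
      rw [hA x u, hA x w, ← ha]
      simp only [LinearMap.smul_apply, smul_eq_mul]
      module
  have hN : ∀ x y, (c₁ • B + c₂ • C) x y = (c₁ • B + c₂ • C) y x := fun x y => by
    simp [hB x y, hC x y]
  have hNU : ∀ x, (c₁ • B + c₂ • C) x ∈ U := apply_mem_of_forall_apply_ne_zero hκ fun x hx => by
    have := U.smul_mem (κ x)⁻¹ (hBC x)
    rw [hBCκ x, smul_smul, inv_mul_cancel₀ hx, one_smul] at this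
    simpa using this
  have hNA : ∀ α : K, c₁ • B + c₂ • C ≠ α • A := fun α hα => hc <| by
    have := (Fintype.linearIndependent_iff (R := K) (M := V →ₗ[K] Dual K V)).mp hABC
      ![-α, c₁, c₂] (by
        simp only [Fin.sum_univ_three, Matrix.cons_val_zero, Matrix.cons_val_one,
          Matrix.cons_val_two, Matrix.head_cons, Matrix.tail_cons, neg_smul]
        rw [add_assoc, hα, neg_add_cancel])
    ext i
    fin_cases i
    exacts [this 1, this 2]
  have hdepN : ∀ P : V →ₗ[K] Dual K V, (∀ v, P v ∈ span K (Set.range ![A v, B v, C v])) →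
      ∀ v, ¬ LinearIndependent K ![A v, (c₁ • B + c₂ • C) v, P v] := fun P hP v =>
    not_linearIndependent_of_forall_mem_span (hdep v) fun i => by
      fin_cases i
      · exact subset_span ⟨0, rfl⟩
      · exact add_mem (smul_mem _ _ (subset_span ⟨1, rfl⟩)) (smul_mem _ _ (subset_span ⟨2, rfl⟩))
      · exact hP v
  exact ⟨apply_mem_span_pair_of_ne_smul hβγ hA hN hA0 hNA hAU hNU
      (hdepN B fun v => subset_span ⟨1, rfl⟩) x,
    apply_mem_span_pair_of_ne_smul hβγ hA hN hA0 hNA hAU hNU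
      (hdepN C fun v => subset_span ⟨2, rfl⟩) x⟩

theorem apply_mem_span_pair_of_apply_eq_zero [CharZero K] {A B C : V →ₗ[K] Dual K V}
    {v₀ u w : V} (hA : ∀ x y, A x y = A y x) (hB : ∀ x y, B x y = B y x)
    (hC : ∀ x y, C x y = C y x) (hA0 : A ≠ 0) (hABC : LinearIndependent K ![A, B, C])
    (hdep : ∀ v, ¬ LinearIndependent K ![A v, B v, C v]) (hAv₀ : A v₀ = 0)
    (hβγ : IsDualPair (B v₀) (C v₀) u w) (x : V) :
    A x ∈ span K {B v₀, C v₀} ∧ B x ∈ span K {B v₀, C v₀} ∧ C x ∈ span K {B v₀, C v₀} := by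
  set U := span K {B v₀, C v₀}
  have hβ : B v₀ ∈ U := subset_span (Set.mem_insert _ _)
  have hγ : C v₀ ∈ U := subset_span (Set.mem_insert_of_mem _ rfl)
  have hexp := minor_coeffs_eq_zero_of_apply_eq_zero hdep hAv₀ hβγ
  have hAU : ∀ x, A x ∈ U := fun x => by
    have hAx : A x = A x u • B v₀ + A x w • C v₀ :=
      LinearMap.ext fun z => by simpa using (hexp x z).1
    rw [hAx]
    exact add_mem (smul_mem _ _ hβ) (smul_mem _ _ hγ)
  have hBC : ∀ x, A x u • B x + A x w • C x ∈ U := fun x => by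
    have hBCx : A x u • B x + A x w • C x = (B x u + C x w) • A x +
        (C x u * A x w - A x u * C x w) • B v₀ + (A x u * B x w - B x u * A x w) • C v₀ :=
      LinearMap.ext fun z => by simpa using (hexp x z).2
    rw [hBCx]
    exact add_mem (add_mem (smul_mem _ _ (hAU x)) (smul_mem _ _ hβ)) (smul_mem _ _ hγ)
  by_cases hAuw : LinearIndependent K ![A u, A w]
  · exact ⟨hAU x, apply_mem_span_pair_of_linearIndependent hβγ hA hB hC hdep hAU hBC hAuw x⟩
  · exact ⟨hAU x,
      apply_mem_span_pair_of_not_linearIndependent hβγ hA hB hC hA0 hABC hdep hAU hBC hAuw x⟩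

end

theorem eq_symPerp_of_forall_apply_mem_span_pair {V : Type*} [AddCommGroup V] [Module ℂ V]
    {X : Submodule ℂ (V →ₗ[ℂ] Dual ℂ V)} {β γ : Dual ℂ V} {u w : V} (hβγ : IsDualPair β γ u w)
    (hXsym : ∀ M ∈ X, ∀ x y : V, M x y = M y x) (hXdim : finrank ℂ X = 3)
    (hX : ∀ M ∈ X, ∀ x, M x ∈ span ℂ {β, γ}) :
    X = symPerp (span ℂ {β, γ}).dualCoannihilator := by
  set W := (span ℂ {β, γ}).dualCoannihilator
  have hW : ∀ x, x - β x • u - γ x • w ∈ W := fun x => by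
    rw [mem_dualCoannihilator]
    intro φ hφ
    rw [hβγ.eq_of_mem_span hφ]
    simp [hβγ.fst_fst, hβγ.fst_snd, hβγ.snd_fst, hβγ.snd_snd]
  have hle : X ≤ symPerp W := fun M hM => ⟨hXsym M hM, fun y hy => LinearMap.ext fun z => by
    rw [LinearMap.zero_apply, hXsym M hM y z]
    exact (mem_dualCoannihilator y).mp hy _ (hX M hM z)⟩
  have hspan : symPerp W ≤ span ℂ (Set.range
      ![β.smulRight β, β.smulRight γ + γ.smulRight β, γ.smulRight γ]) := by
    rintro M ⟨hMs, hMW⟩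
    have hMx : ∀ x, M x = β x • M u + γ x • M w := fun x => by
      have := hMW _ (hW x)
      simp only [map_sub, map_smul] at this
      linear_combination (norm := module) this
    refine (mem_span_range_iff_exists_fun ℂ).mpr ⟨![M u u, M u w, M w w], ?_⟩
    ext x y
    simp only [Fin.sum_univ_three, Matrix.cons_val_zero, Matrix.cons_val_one, Matrix.cons_val,
      LinearMap.add_apply, LinearMap.smul_apply, LinearMap.coe_smulRight, smul_eq_mul, hMx x,
      hMs u y, hMs w y, hMx y, hMs w u]
    ring
  have := FiniteDimensional.span_of_finite ℂ (Set.finite_range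
      ![β.smulRight β, β.smulRight γ + γ.smulRight β, γ.smulRight γ])
  have := Submodule.finiteDimensional_of_le hspan
  refine eq_of_le_of_finrank_le hle ?_
  calc finrank ℂ (symPerp W) ≤ _ := Submodule.finrank_mono hspan
    _ ≤ 3 := finrank_range_le_card (R := ℂ) _
    _ = finrank ℂ X := hXdim.symm

theorem oort_keel_sadun_prop_4_6_general {V : Type*} [AddCommGroup V] [Module ℂ V]
    [FiniteDimensional ℂ V] (g : ℕ) (hVg : Module.finrank ℂ V = g)
    (X : Submodule ℂ (V →ₗ[ℂ] Module.Dual ℂ V))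
    (hXsym : ∀ M ∈ X, ∀ x y : V, M x y = M y x)
    (hXdim : Module.finrank ℂ X = 3)
    (heval : ∀ v : V, ¬ Function.Injective fun N : X => (N : V →ₗ[ℂ] Module.Dual ℂ V) v) :
    ∃ W : Submodule ℂ V, Module.finrank ℂ W = g - 2 ∧ X = symPerp W := by
  have hev := fun v => exists_ne_zero_apply_eq_zero_of_not_injective (heval v)
  obtain ⟨v₀, B, hBX, C, hCX, hBC⟩ :
      ∃ v₀, ∃ B ∈ X, ∃ C ∈ X, LinearIndependent ℂ ![B v₀, C v₀] := by
    by_contra! h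
    have := finrank_le_one_of_forall_not_linearIndependent X hXsym fun M hM N hN v => h v M hM N hN
    omega
  obtain ⟨A, hAX, hA0, hAv₀⟩ := hev v₀
  have hABC := linearIndependent_of_apply_eq_zero hA0 hAv₀ hBC
  have : FiniteDimensional ℂ X := .of_finrank_pos (by omega)
  have hXspan := span_range_eq_of_linearIndependent hABC
    (fun i => by fin_cases i <;> assumption) (by simp [hXdim])
  have hdep : ∀ v, ¬ LinearIndependent ℂ ![A v, B v, C v] := fun v => by
    obtain ⟨M, hMX, hM0, hMv⟩ := hev v
    have h := not_linearIndependent_apply_of_mem_span (hXspan ▸ hMX) hM0 hMv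
    rwa [show (fun i => ![A, B, C] i v) = ![A v, B v, C v] by ext i; fin_cases i <;> rfl] at h
  obtain ⟨u, w, hβγ⟩ := exists_isDualPair hBC
  have hU := apply_mem_span_pair_of_apply_eq_zero (hXsym A hAX) (hXsym B hBX) (hXsym C hCX)
    hA0 hABC hdep hAv₀ hβγ
  refine ⟨_, hVg ▸ finrank_dualCoannihilator_span_pair hBC,
    eq_symPerp_of_forall_apply_mem_span_pair hβγ hXsym hXdim fun M hM => ?_⟩
  refine apply_mem_of_mem_span_range (fun i x => ?_) (hXspan ▸ hM)
  fin_cases i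
  exacts [(hU x).1, (hU x).2.1, (hU x).2.2]

/-- **Proposition 4.6.** Let `V` be a complex vector space of dimension `g ≥ 3` and
`X ⊆ S(V,V*)` a 3-dimensional linear subspace such that for every `v ∈ V` the evaluation
map `e_v : X → V*` fails to be injective. Then `X = W^⊥` for some linear subspace
`W ⊆ V` of dimension `g - 2`. -/
theorem oort_keel_sadun_prop_4_6 {V : Type*} [AddCommGroup V] [Module ℂ V]
    [FiniteDimensional ℂ V] (g : ℕ) (hg : 3 ≤ g) (hVg : Module.finrank ℂ V = g)
    (X : Submodule ℂ (V →ₗ[ℂ] Module.Dual ℂ V))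
    (hXsym : ∀ M ∈ X, ∀ x y : V, M x y = M y x)
    (hXdim : Module.finrank ℂ X = 3)
    (heval : ∀ v : V, ¬ Function.Injective fun N : X => (N : V →ₗ[ℂ] Module.Dual ℂ V) v) :
    ∃ W : Submodule ℂ V, Module.finrank ℂ W = g - 2 ∧ X = symPerp W :=
  oort_keel_sadun_prop_4_6_general g hVg X hXsym hXdim heval
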